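/- arXiv:2210.15817 — 2 statements merged into one kernel-verified Lean document; each statement's English description precedes it below -/
import Mathlib

section
/- Let A be a Banach algebra and X, Y ∈ A. Define S₂(t) = exp(Xt/2)·exp(Yt)·exp(Xt/2). Then exp((X+Y)t) − S₂(t) is O(t³) as t → 0: there exist C > 0 and δ > 0 such that for all |t| ≤ δ, ‖exp((X+Y)t) − S₂(t)‖ ≤ C·|t|³. -/
/-!
The error `E t = exp (t • (X + Y)) - S₂ t` is smooth, so by Taylor's theorem it is `O(t³)` as
soon as `E`, `E'` and `E''` vanish at `0`. The Leibniz rule gives the derivatives of the product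
`S₂` at `0`: they are `(X + Y) ^ n` for `n ≤ 2`. For `n = 2` this uses the symmetry of the
splitting: `4 (X/2)² + 2 (X/2) Y + 2 Y (X/2) + Y² = (X + Y)²`, whereas the unsymmetric product
`exp (t • X) * exp (t • Y)` has second derivative `X² + 2 X Y + Y²` at `0`.
-/

open NormedSpace Asymptotics Filter Topology

theorem isBigO_pow_of_iteratedDeriv_eq_zero {E : Type*} [NormedAddCommGroup E] [NormedSpace ℝ E]
    {f : ℝ → E} {x₀ : ℝ} {k : ℕ} (hf : ContDiff ℝ k f)
    (hvanish : ∀ n < k, iteratedDeriv n f x₀ = 0) :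
    f =O[𝓝 x₀] fun x => (x - x₀) ^ k := by
  have htaylor : taylorWithinEval f k Set.univ x₀ =
      fun x => ((k.factorial : ℝ)⁻¹ * (x - x₀) ^ k) • iteratedDeriv k f x₀ := by
    funext x
    rw [taylor_within_apply, Finset.sum_range_succ, iteratedDerivWithin_univ,
      Finset.sum_eq_zero fun n hn => by
        rw [iteratedDerivWithin_univ, hvanish n (Finset.mem_range.1 hn), smul_zero],
      zero_add]
  have hpoly : taylorWithinEval f k Set.univ x₀ =O[𝓝 x₀] fun x => (x - x₀) ^ k := by
    rw [htaylor]
    refine isBigO_of_le' (c := (k.factorial : ℝ)⁻¹ * ‖iteratedDeriv k f x₀‖) _ fun x => ?_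
    rw [norm_smul, norm_mul, norm_inv, RCLike.norm_natCast]
    exact le_of_eq (by ring)
  simpa using (taylor_isLittleO_univ hf).isBigO.add hpoly

theorem exists_pos_bound_of_isBigO_pow {E : Type*} [NormedAddCommGroup E] {f : ℝ → E} {k : ℕ}
    (hf : f =O[𝓝 0] fun t => t ^ k) :
    ∃ C > (0 : ℝ), ∃ δ > (0 : ℝ), ∀ t : ℝ, |t| ≤ δ → ‖f t‖ ≤ C * |t| ^ k := by
  obtain ⟨C, hC, hfC⟩ := hf.exists_pos
  obtain ⟨δ, hδ, hbound⟩ := Metric.nhds_basis_closedBall.eventually_iff.1 hfC.bound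
  refine ⟨C, hC, δ, hδ, fun t ht => ?_⟩
  simpa [norm_pow] using hbound (by simpa using ht)

section

variable {𝕂 𝔸 : Type*} [RCLike 𝕂] [NormedRing 𝔸] [NormedAlgebra 𝕂 𝔸]

noncomputable def strangSplitting (X Y : 𝔸) (t : 𝕂) : 𝔸 :=
  exp ((t / 2) • X) * exp (t • Y) * exp ((t / 2) • X)

theorem strangSplitting_eq (X Y : 𝔸) : strangSplitting (𝕂 := 𝕂) X Y =
    fun t => exp (t • (2⁻¹ : 𝕂) • X) * exp (t • Y) * exp (t • (2⁻¹ : 𝕂) • X) := by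
  funext t
  simp only [strangSplitting, smul_smul, div_eq_mul_inv]

variable [CompleteSpace 𝔸]

theorem contDiff_exp_smul (A : 𝔸) {n : WithTop ℕ∞} : ContDiff 𝕂 n fun t : 𝕂 => exp (t • A) :=
  contDiff_iff_contDiffAt.2 fun t =>
    ((exp_analytic (t • A)).comp (f := fun s : 𝕂 => s • A)
      (analyticAt_id.smul analyticAt_const)).contDiffAt

theorem iteratedDeriv_exp_smul (A : 𝔸) (n : ℕ) :
    iteratedDeriv n (fun t : 𝕂 => exp (t • A)) = fun t => A ^ n * exp (t • A) := by
  induction n with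
  | zero => simp
  | succ n ih =>
    funext t
    rw [iteratedDeriv_succ, ih, ((hasDerivAt_exp_smul_const' A t).const_mul (A ^ n)).deriv,
      pow_succ, mul_assoc]

theorem iteratedDeriv_exp_smul_zero (A : 𝔸) (n : ℕ) :
    iteratedDeriv n (fun t : 𝕂 => exp (t • A)) 0 = A ^ n := by
  simp [iteratedDeriv_exp_smul]

theorem iteratedDeriv_exp_mul_exp_mul_exp_zero (A B C : 𝔸) (n : ℕ) :
    iteratedDeriv n (fun t : 𝕂 => exp (t • A) * exp (t • B) * exp (t • C)) 0 =
      ∑ i ∈ Finset.range (n + 1), ∑ j ∈ Finset.range (i + 1),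
        (n.choose i * i.choose j : 𝔸) * A ^ j * B ^ (i - j) * C ^ (n - i) := by
  rw [iteratedDeriv_fun_mul ((contDiff_exp_smul A).mul (contDiff_exp_smul B)).contDiffAt
    (contDiff_exp_smul C).contDiffAt]
  refine Finset.sum_congr rfl fun i _ => ?_
  rw [iteratedDeriv_fun_mul (contDiff_exp_smul A).contDiffAt (contDiff_exp_smul B).contDiffAt,
    iteratedDeriv_exp_smul_zero, Finset.mul_sum, Finset.sum_mul]
  refine Finset.sum_congr rfl fun j _ => ?_
  simp only [iteratedDeriv_exp_smul_zero]
  noncomm_ring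

theorem contDiff_strangSplitting (X Y : 𝔸) {n : WithTop ℕ∞} :
    ContDiff 𝕂 n (strangSplitting (𝕂 := 𝕂) X Y) := by
  rw [strangSplitting_eq]
  exact ((contDiff_exp_smul _).mul (contDiff_exp_smul Y)).mul (contDiff_exp_smul _)

theorem iteratedDeriv_strangSplitting_zero (X Y : 𝔸) {n : ℕ} (hn : n ≤ 2) :
    iteratedDeriv n (strangSplitting (𝕂 := 𝕂) X Y) 0 = (X + Y) ^ n := by
  rw [strangSplitting_eq, iteratedDeriv_exp_mul_exp_mul_exp_zero]
  interval_cases n <;>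
    simp [Finset.sum_range_succ, sq, two_mul, add_mul, mul_add,
      smul_smul] <;> module

end

theorem strang_splitting_second_order_error
    {𝔸 : Type*} [NormedRing 𝔸] [NormedAlgebra ℂ 𝔸] [CompleteSpace 𝔸]
    (X Y : 𝔸) :
    ∃ C > (0 : ℝ), ∃ δ > (0 : ℝ), ∀ t : ℝ, |t| ≤ δ →
      ‖exp (t • (X + Y)) -
        exp ((t / 2) • X) * exp (t • Y) * exp ((t / 2) • X)‖ ≤ C * |t| ^ 3 := by
  set error : ℝ → 𝔸 := fun t => exp (t • (X + Y)) - strangSplitting X Y t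
  have hsmooth : ContDiff ℝ 3 error := (contDiff_exp_smul _).sub (contDiff_strangSplitting X Y)
  have hvanish : ∀ n < 3, iteratedDeriv n error 0 = 0 := fun n hn => by
    rw [iteratedDeriv_fun_sub (contDiff_exp_smul _).contDiffAt
      (contDiff_strangSplitting X Y).contDiffAt, iteratedDeriv_exp_smul_zero,
      iteratedDeriv_strangSplitting_zero X Y (by omega), sub_self]
  have hO : error =O[𝓝 0] fun t => t ^ 3 := by
    simpa only [sub_zero] using isBigO_pow_of_iteratedDeriv_eq_zero hsmooth hvanish
  exact exists_pos_bound_of_isBigO_pow hO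
end

section
/- Let U, D, V be unitary n×n complex matrices and r a natural number. Then ‖V·D^r·V† − U^r‖ ≤ 2·‖V − I‖ + r·‖D − U‖, where ‖·‖ is the operator norm and V† is the conjugate transpose of V. -/
/-!
Write `V D^r V† - U^r = (V D^r V† - D^r) + (D^r - U^r)`. Multiplication by a unitary is an
isometry in a C⋆-ring, so conjugating a unitary `W` by `V` moves it by at most `2 ‖V - 1‖`
(`V W V† - W = (V - 1) W V† + W (V† - 1)`), and the telescoping identity
`D^(k+1) - U^(k+1) = D^k (D - U) + (D^k - U^k) U` makes `‖D^r - U^r‖` grow by at most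
`‖D - U‖` per step.
-/

namespace CStarRing

variable {E : Type*} [NormedRing E] [StarRing E] [CStarRing E] {u v w : E}

theorem norm_pow_sub_pow_le_of_mem_unitary (hu : u ∈ unitary E) (hv : v ∈ unitary E) (r : ℕ) :
    ‖u ^ r - v ^ r‖ ≤ r * ‖u - v‖ := by
  induction r with
  | zero => simp
  | succ k ih =>
    have telescope : u ^ (k + 1) - v ^ (k + 1) = u ^ k * (u - v) + (u ^ k - v ^ k) * v := by
      simp only [pow_succ, mul_sub, sub_mul]; abel
    calc ‖u ^ (k + 1) - v ^ (k + 1)‖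
        ≤ ‖u ^ k * (u - v)‖ + ‖(u ^ k - v ^ k) * v‖ := telescope ▸ norm_add_le _ _
      _ = ‖u - v‖ + ‖u ^ k - v ^ k‖ := by
        rw [norm_mem_unitary_mul _ (pow_mem hu k), norm_mul_mem_unitary _ hv]
      _ ≤ (k + 1 : ℕ) * ‖u - v‖ := by push_cast; linarith

theorem norm_conj_sub_le_of_mem_unitary (hv : v ∈ unitary E) (hw : w ∈ unitary E) :
    ‖v * w * star v - w‖ ≤ 2 * ‖v - 1‖ := by
  have split : v * w * star v - w = (v - 1) * w * star v + w * star (v - 1) := by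
    simp only [star_sub, star_one, sub_mul, mul_sub, one_mul, mul_one]; abel
  calc ‖v * w * star v - w‖ ≤ ‖(v - 1) * w * star v‖ + ‖w * star (v - 1)‖ :=
        split ▸ norm_add_le _ _
    _ = ‖v - 1‖ + ‖v - 1‖ := by
      rw [norm_mul_mem_unitary _ (Unitary.star_mem hv), norm_mul_mem_unitary _ hw,
        norm_mem_unitary_mul _ hw, norm_star]
    _ = 2 * ‖v - 1‖ := by ring

end CStarRing

theorem eigenvalue_basis_error_split (n : ℕ)
    (U D V : EuclideanSpace ℂ (Fin n) →L[ℂ] EuclideanSpace ℂ (Fin n))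
    (hU : U ∈ unitary (EuclideanSpace ℂ (Fin n) →L[ℂ] EuclideanSpace ℂ (Fin n)))
    (hD : D ∈ unitary (EuclideanSpace ℂ (Fin n) →L[ℂ] EuclideanSpace ℂ (Fin n)))
    (hV : V ∈ unitary (EuclideanSpace ℂ (Fin n) →L[ℂ] EuclideanSpace ℂ (Fin n)))
    (r : ℕ) :
    ‖V * D ^ r * star V - U ^ r‖ ≤ 2 * ‖V - 1‖ + r * ‖D - U‖ :=
  calc ‖V * D ^ r * star V - U ^ r‖
      ≤ ‖V * D ^ r * star V - D ^ r‖ + ‖D ^ r - U ^ r‖ := norm_sub_le_norm_sub_add_norm_sub _ _ _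
    _ ≤ 2 * ‖V - 1‖ + r * ‖D - U‖ :=
      add_le_add (CStarRing.norm_conj_sub_le_of_mem_unitary hV (pow_mem hD r))
        (CStarRing.norm_pow_sub_pow_le_of_mem_unitary hD hU r)
end
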